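/- The real subalgebra of Cl(3,3) generated by the six elements γ⁰ := β¹γ¹β²γ²β³γ³, γ¹, γ², γ³, i := β¹β², and C := β¹ equals all of Cl(3,3); in particular, the 'extended Dirac algebra' generated by {γ^μ, i, C} is isomorphic to Cl(3,3). -/

import Mathlib

noncomputable section
open CliffordAlgebra

/-- The quadratic form of signature (3,3) on ℝ⁶: the first three coordinates
(the `β` directions) have weight `+1`, the last three (the `γ` directions) weight `-1`. -/
def Q33 : QuadraticForm ℝ (Fin 6 → ℝ) :=
  QuadraticMap.weightedSumSquares ℝ (![1, 1, 1, -1, -1, -1] : Fin 6 → ℝ)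

/-- The real Clifford algebra Cl(3,3). -/
abbrev Cl33 := CliffordAlgebra Q33

/-- The generators β¹,β²,β³ (squaring to `+1`). -/
def β (k : Fin 3) : Cl33 := ι Q33 (Pi.single (Fin.castAdd 3 k) 1)

/-- The generators γ¹,γ²,γ³ (squaring to `-1`). -/
def γ (k : Fin 3) : Cl33 := ι Q33 (Pi.single (Fin.natAdd 3 k) 1)

/-- γ⁰ := β¹γ¹β²γ²β³γ³. -/
def γ0 : Cl33 := β 0 * γ 0 * β 1 * γ 1 * β 2 * γ 2

/-!
The subalgebra contains β¹ = C and β² = C·i, and since γ⁰ = β¹γ¹β²γ²β³γ³ with all the other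
factors invertible inside it, also β³ = -γ²β²γ¹β¹ γ⁰ γ³. Thus it contains the image under `ι`
of a basis of ℝ⁶, and the vectors generate any Clifford algebra.
-/

theorem CliffordAlgebra.eq_top_of_forall_ι_mem {R M : Type*} [CommRing R] [AddCommGroup M]
    [Module R M] {Q : QuadraticForm R M} {ι' : Type*} {v : ι' → M}
    (hv : Submodule.span R (Set.range v) = ⊤) {A : Subalgebra R (CliffordAlgebra Q)}
    (hA : ∀ i, ι Q (v i) ∈ A) : A = ⊤ := by
  rw [eq_top_iff, ← adjoin_range_ι (Q := Q), Algebra.adjoin_le_iff]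
  rintro _ ⟨m, rfl⟩
  have hspan : Submodule.span R (Set.range (ι Q ∘ v)) ≤ Subalgebra.toSubmodule A :=
    Submodule.span_le.2 <| Set.range_subset_iff.2 hA
  apply hspan
  rw [Set.range_comp, Submodule.span_image, hv]
  exact Submodule.mem_map_of_mem Submodule.mem_top

theorem QuadraticMap.weightedSumSquares_single {R : Type*} [CommSemiring R] {n : Type*}
    [Fintype n] [DecidableEq n] (w : n → R) (i : n) :
    QuadraticMap.weightedSumSquares R w (Pi.single i 1) = w i := by
  rw [weightedSumSquares_apply, Finset.sum_eq_single i]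
  · simp
  · intro j _ hj
    simp [Pi.single_eq_of_ne hj]
  · simp

theorem Q33_single (i : Fin 6) : Q33 (Pi.single i 1) = ![1, 1, 1, -1, -1, -1] i :=
  QuadraticMap.weightedSumSquares_single _ i

theorem β_mul_self (k : Fin 3) : β k * β k = 1 := by
  rw [β, ι_sq_scalar, Q33_single]
  fin_cases k <;> simp

theorem γ_mul_self (k : Fin 3) : γ k * γ k = -1 := by
  rw [γ, ι_sq_scalar, Q33_single]
  fin_cases k <;> simp

theorem β_mul_β_mul (k : Fin 3) (x : Cl33) : β k * (β k * x) = x := by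
  rw [← mul_assoc, β_mul_self, one_mul]

theorem γ_mul_γ_mul (k : Fin 3) (x : Cl33) : γ k * (γ k * x) = -x := by
  rw [← mul_assoc, γ_mul_self, neg_one_mul]

theorem β_one_eq : β 1 = β 0 * (β 0 * β 1) :=
  (β_mul_β_mul 0 _).symm

theorem β_two_eq : β 2 = -(γ 1 * β 1 * γ 0 * β 0 * γ0 * γ 2) := by
  simp only [γ0, mul_assoc, γ_mul_self, mul_neg, mul_one, β_mul_β_mul, γ_mul_γ_mul, neg_neg]

/-- the subalgebra generated by γ⁰, γ¹, γ², γ³, i := β¹β² and C := β¹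
is all of Cl(3,3); in particular the "extended Dirac algebra" generated by
{γ^μ, i, C} is isomorphic to Cl(3,3). -/
theorem stmt6 :
    Algebra.adjoin ℝ ({γ0, γ 0, γ 1, γ 2, β 0 * β 1, β 0} : Set Cl33) = ⊤ := by
  set A := Algebra.adjoin ℝ ({γ0, γ 0, γ 1, γ 2, β 0 * β 1, β 0} : Set Cl33)
  have hγ0 : γ0 ∈ A := Algebra.subset_adjoin (by simp)
  have hγ : ∀ k, γ k ∈ A := fun k => Algebra.subset_adjoin (by fin_cases k <;> simp)
  have hi : β 0 * β 1 ∈ A := Algebra.subset_adjoin (by simp)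
  have hβ0 : β 0 ∈ A := Algebra.subset_adjoin (by simp)
  have hβ1 : β 1 ∈ A := β_one_eq ▸ mul_mem hβ0 hi
  have hβ2 : β 2 ∈ A := β_two_eq ▸ neg_mem
    (mul_mem (mul_mem (mul_mem (mul_mem (mul_mem (hγ 1) hβ1) (hγ 0)) hβ0) hγ0) (hγ 2))
  have hβ : ∀ k, β k ∈ A := by
    intro k
    fin_cases k
    exacts [hβ0, hβ1, hβ2]
  refine eq_top_of_forall_ι_mem (Pi.basisFun ℝ (Fin 6)).span_eq fun i => ?_
  rw [Pi.basisFun_apply]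
  exact Fin.addCases (m := 3) (n := 3) hβ hγ i
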